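/- arXiv:2501.04566 — 4 statements merged into one kernel-verified Lean document; each statement's English description precedes it below -/
import Mathlib

section
/- Recursive update for time-varying regularization RLS: for k ≥ 1, defining A_k = Σ_{i=0}^k φ_iᵀΓ_iφ_i + R_k and P_{k+1} = A_k⁻¹ (all A_k assumed invertible), and θ_{k+1} = A_k⁻¹(Σ_{i=0}^k φ_iᵀΓ_iy_i + R_kθ_reg,k), it holds that P_{k+1}⁻¹ = P_k⁻¹ + φ_kᵀΓ_kφ_k + R_k - R_{k-1} and θ_{k+1} = θ_k + P_{k+1}[φ_kᵀΓ_k(y_k - φ_kθ_k) + R_k(θ_reg,k - θ_k) - R_{k-1}(θ_reg,k-1 - θ_k)]. -/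
open Matrix Finset

theorem tv_reg_rls_recursive_update (p n : ℕ)
    (φ : ℕ → Matrix (Fin p) (Fin n) ℝ) (y : ℕ → Fin p → ℝ)
    (Γ : ℕ → Matrix (Fin p) (Fin p) ℝ) (hΓ : ∀ i, (Γ i).PosSemidef)
    (R : ℕ → Matrix (Fin n) (Fin n) ℝ) (hR : ∀ i, (R i).PosSemidef)
    (θreg : ℕ → Fin n → ℝ)
    (A : ℕ → Matrix (Fin n) (Fin n) ℝ)
    (hA : ∀ j, A j = (∑ i ∈ range (j + 1), (φ i)ᵀ * Γ i * φ i) + R j)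
    (hApd : ∀ j, (A j).PosDef)
    (P : ℕ → Matrix (Fin n) (Fin n) ℝ) (hP : ∀ j, P (j + 1) = (A j)⁻¹)
    (θ : ℕ → Fin n → ℝ)
    (hθ : ∀ j, θ (j + 1) = (A j)⁻¹.mulVec
      ((∑ i ∈ range (j + 1), ((φ i)ᵀ * Γ i).mulVec (y i)) + (R j).mulVec (θreg j)))
    (k : ℕ) (hk : 1 ≤ k) :
    (P (k + 1))⁻¹ = (P k)⁻¹ + (φ k)ᵀ * Γ k * φ k + R k - R (k - 1) ∧
    θ (k + 1) = θ k + (P (k + 1)).mulVec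
      (((φ k)ᵀ * Γ k).mulVec (y k - (φ k).mulVec (θ k))
        + (R k).mulVec (θreg k - θ k)
        - (R (k - 1)).mulVec (θreg (k - 1) - θ k)) := by
  obtain ⟨m, rfl⟩ : ∃ m, k = m + 1 := ⟨k - 1, (Nat.succ_pred_eq_of_pos hk).symm⟩
  simp only [Nat.add_sub_cancel]
  have hinv : ∀ j, IsUnit (A j).det := fun j => ((hApd j).det_pos).ne'.isUnit
  have hAsplit : A (m + 1) = A m + (φ (m+1))ᵀ * Γ (m+1) * φ (m+1) + R (m+1) - R m := by
    rw [hA (m+1), hA m, sum_range_succ]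
    abel
  constructor
  · rw [hP, hP, Matrix.nonsing_inv_nonsing_inv _ (hinv _),
      Matrix.nonsing_inv_nonsing_inv _ (hinv _), hAsplit]
  · -- θ part
    have hCθ : (A m).mulVec (θ (m+1)) =
        (∑ i ∈ range (m + 1), ((φ i)ᵀ * Γ i).mulVec (y i)) + (R m).mulVec (θreg m) := by
      rw [hθ m, Matrix.mulVec_mulVec, Matrix.mul_nonsing_inv _ (hinv m), Matrix.one_mulVec]
    have key : (∑ i ∈ range (m + 2), ((φ i)ᵀ * Γ i).mulVec (y i)) + (R (m+1)).mulVec (θreg (m+1))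
        = (A (m+1)).mulVec (θ (m+1)) +
          (((φ (m+1))ᵀ * Γ (m+1)).mulVec (y (m+1) - (φ (m+1)).mulVec (θ (m+1)))
            + (R (m+1)).mulVec (θreg (m+1) - θ (m+1))
            - (R m).mulVec (θreg m - θ (m+1))) := by
      rw [sum_range_succ, hAsplit]
      simp only [Matrix.sub_mulVec, Matrix.add_mulVec, Matrix.mulVec_sub, hCθ,
        Matrix.mulVec_mulVec, Matrix.mul_assoc]
      abel
    rw [hθ (m+1), hP, key, Matrix.mulVec_add]
    congr 1
    rw [Matrix.mulVec_mulVec, Matrix.nonsing_inv_mul _ (hinv _), Matrix.one_mulVec]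
end

section
/- Error dynamics of time-varying regularization RLS: under the noiseless linear model y_i = φ_iθ, the estimation error θ̃_k = θ_k - θ satisfies, for all k ≥ 1, θ̃_{k+1} = P_{k+1}[P_k⁻¹θ̃_k + R_k(θ_reg,k - θ) - R_{k-1}(θ_reg,k-1 - θ)]. -/
open Matrix Finset

lemma my_sum_mulVec {n m : ℕ} (s : Finset ℕ) (M : ℕ → Matrix (Fin m) (Fin n) ℝ)
    (v : Fin n → ℝ) : (∑ i ∈ s, M i).mulVec v = ∑ i ∈ s, (M i).mulVec v := by
  induction s using Finset.cons_induction with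
  | empty => simp [Matrix.zero_mulVec]
  | cons a s ha ih => simp [Finset.sum_insert ha, Matrix.add_mulVec, ih]

theorem tv_reg_rls_error_dynamics (p n : ℕ)
    (φ : ℕ → Matrix (Fin p) (Fin n) ℝ) (y : ℕ → Fin p → ℝ)
    (Γ : ℕ → Matrix (Fin p) (Fin p) ℝ) (hΓ : ∀ i, (Γ i).PosSemidef)
    (R : ℕ → Matrix (Fin n) (Fin n) ℝ) (hR : ∀ i, (R i).PosSemidef)
    (θreg : ℕ → Fin n → ℝ)
    (A : ℕ → Matrix (Fin n) (Fin n) ℝ)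
    (hA : ∀ j, A j = (∑ i ∈ range (j + 1), (φ i)ᵀ * Γ i * φ i) + R j)
    (hApd : ∀ j, (A j).PosDef)
    (P : ℕ → Matrix (Fin n) (Fin n) ℝ) (hP : ∀ j, P (j + 1) = (A j)⁻¹)
    (θ : ℕ → Fin n → ℝ)
    (hθ : ∀ j, θ (j + 1) = (A j)⁻¹.mulVec
      ((R j).mulVec (θreg j) + ∑ i ∈ range (j + 1), ((φ i)ᵀ * Γ i).mulVec (y i)))
    (θtrue : Fin n → ℝ) (hy : ∀ i, y i = (φ i).mulVec θtrue)
    (θtil : ℕ → Fin n → ℝ) (hθtil : ∀ j, θtil (j + 1) = θ (j + 1) - θtrue)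
    (k : ℕ) (hk : 1 ≤ k) :
    θtil (k + 1) = (P (k + 1)).mulVec
      ((P k)⁻¹.mulVec (θtil k)
        + (R k).mulVec (θreg k - θtrue)
        - (R (k - 1)).mulVec (θreg (k - 1) - θtrue)) := by
  have hdet : ∀ j, IsUnit (A j).det := fun j => isUnit_iff_ne_zero.mpr (hApd j).det_pos.ne'
  have key : ∀ j, θtil (j + 1) = (A j)⁻¹.mulVec ((R j).mulVec (θreg j - θtrue)) := by
    intro j
    have hsum : (∑ i ∈ range (j + 1), ((φ i)ᵀ * Γ i).mulVec (y i))
        = (A j - R j).mulVec θtrue := by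
      rw [hA j, add_sub_cancel_right, my_sum_mulVec]
      refine Finset.sum_congr rfl fun i _ => ?_
      rw [hy i, mulVec_mulVec]
    rw [hθtil, hθ, hsum, mulVec_sub, mulVec_sub]
    have hAA : (A j)⁻¹.mulVec ((A j).mulVec θtrue) = θtrue := by
      rw [mulVec_mulVec, nonsing_inv_mul _ (hdet j), one_mulVec]
    rw [mulVec_add, sub_mulVec, mulVec_sub, hAA]
    abel
  obtain ⟨m, rfl⟩ := Nat.exists_eq_add_of_le hk
  simp only [Nat.add_sub_cancel' hk, add_comm 1 m] at *
  have hPk : (P (m + 1))⁻¹ = A m := by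
    rw [hP m, nonsing_inv_nonsing_inv _ (hdet m)]
  have hm1 : m + 1 - 1 = m := by omega
  have hc : ∀ w : Fin n → ℝ, A m *ᵥ (A m)⁻¹ *ᵥ w = w := fun w => by
    rw [mulVec_mulVec, mul_nonsing_inv _ (hdet m), one_mulVec]
  rw [key (m + 1), hPk, key m, hP (m + 1), hm1, hc, add_sub_cancel_left]
end

section
/- Global attractivity with fading regularization: suppose y_i = φ_iθ, R_k → 0 as k → ∞, (‖θ_reg,k‖) is bounded, and there exists k_rank with λ_min(Σ_{i=0}^{k_rank} φ_iᵀΓ_iφ_i) > 0. Then the RLS estimates θ_{k+1} = (R_k + Σ_{i=0}^k φ_iᵀΓ_iφ_i)⁻¹(R_kθ_reg,k + Σ_{i=0}^k φ_iᵀΓ_iy_i) satisfy θ_k → θ as k → ∞. -/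
open Matrix Finset Filter

noncomputable def euclNorm {n : ℕ} (x : Fin n → ℝ) : ℝ :=
  ‖(EuclideanSpace.equiv (Fin n) ℝ).symm x‖

/-! With `S k = ∑ i ≤ k, (φ i)ᵀ Γ i φ i`, the normal equations give
`(R k + S k) (θ (k+1) - θtrue) = R k (θreg k - θtrue)`. For `k ≥ krank` the matrix `R k + S k`
dominates `λ • 1` in the Loewner order, `λ` the least eigenvalue of `S krank`, hence
`‖θ (k+1) - θtrue‖ ≤ λ⁻¹ ‖R k‖ (C + ‖θtrue‖) → 0`. -/

open scoped MatrixOrder ComplexOrder Matrix.Norms.L2Operator Topology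

namespace Matrix

variable {ι 𝕜 : Type*} [Fintype ι] [DecidableEq ι] [RCLike 𝕜]

theorem IsHermitian.algebraMap_iInf_eigenvalues_le {A : Matrix ι ι 𝕜} (hA : A.IsHermitian) :
    algebraMap ℝ _ (⨅ i, hA.eigenvalues i) ≤ A := by
  refine algebraMap_le_of_le_spectrum ?_ hA
  rw [hA.spectrum_real_eq_range_eigenvalues]
  rintro _ ⟨i, rfl⟩
  exact ciInf_le (Set.finite_range _).bddBelow i

theorem posDef_of_algebraMap_le {A : Matrix ι ι 𝕜} {c : ℝ} (hc : 0 < c)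
    (hA : algebraMap ℝ _ c ≤ A) : A.PosDef := by
  have h := (PosDef.one.smul hc).add_posSemidef (le_iff.mp hA)
  rwa [← Algebra.algebraMap_eq_smul_one, add_sub_cancel] at h

end Matrix

section EuclNorm

variable {m n : ℕ}

theorem dotProduct_self_eq_euclNorm_sq (x : Fin n → ℝ) : x ⬝ᵥ x = euclNorm x ^ 2 := by
  rw [euclNorm, ← real_inner_self_eq_norm_sq, EuclideanSpace.inner_eq_star_dotProduct]
  simp

theorem dotProduct_le_euclNorm_mul (x y : Fin n → ℝ) : x ⬝ᵥ y ≤ euclNorm x * euclNorm y := by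
  have h := real_inner_le_norm (WithLp.toLp 2 y) (WithLp.toLp 2 x)
  rw [EuclideanSpace.inner_eq_star_dotProduct] at h
  simpa [euclNorm, mul_comm] using h

theorem euclNorm_mulVec_le (A : Matrix (Fin m) (Fin n) ℝ) (x : Fin n → ℝ) :
    euclNorm (A *ᵥ x) ≤ ‖A‖ * euclNorm x :=
  A.l2_opNorm_mulVec (WithLp.toLp 2 x)

theorem euclNorm_sub_le (x y : Fin n → ℝ) : euclNorm (x - y) ≤ euclNorm x + euclNorm y := by
  simpa only [euclNorm, map_sub] using norm_sub_le _ _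

theorem tendsto_of_tendsto_euclNorm_sub {α : Type*} {l : Filter α} {u : α → Fin n → ℝ}
    {a : Fin n → ℝ} (h : Tendsto (fun k => euclNorm (u k - a)) l (𝓝 0)) : Tendsto u l (𝓝 a) := by
  have hE : Tendsto (fun k => (EuclideanSpace.equiv (Fin n) ℝ).symm (u k)) l
      (𝓝 ((EuclideanSpace.equiv (Fin n) ℝ).symm a)) :=
    tendsto_iff_norm_sub_tendsto_zero.mpr (by simpa only [euclNorm, map_sub] using h)
  exact (EuclideanSpace.equiv (Fin n) ℝ).continuous.tendsto _ |>.comp hE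

theorem mul_euclNorm_le_of_algebraMap_le {M : Matrix (Fin n) (Fin n) ℝ} {c : ℝ}
    (hM : algebraMap ℝ _ c ≤ M) (x : Fin n → ℝ) : c * euclNorm x ≤ euclNorm (M *ᵥ x) := by
  have hquad : c * (x ⬝ᵥ x) ≤ x ⬝ᵥ (M *ᵥ x) := by
    have := (le_iff.mp hM).dotProduct_mulVec_nonneg x
    simp only [star_trivial, sub_mulVec, dotProduct_sub, Algebra.algebraMap_eq_smul_one,
      smul_mulVec, one_mulVec, dotProduct_smul, smul_eq_mul] at this
    linarith
  have hx0 : 0 ≤ euclNorm x := norm_nonneg _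
  rcases hx0.eq_or_lt with hx | hx
  · rw [← hx, mul_zero]; exact norm_nonneg _
  · refine le_of_mul_le_mul_left ?_ hx
    calc euclNorm x * (c * euclNorm x) = c * (x ⬝ᵥ x) := by
          rw [dotProduct_self_eq_euclNorm_sq]; ring
      _ ≤ x ⬝ᵥ (M *ᵥ x) := hquad
      _ ≤ euclNorm x * euclNorm (M *ᵥ x) := dotProduct_le_euclNorm_mul _ _

end EuclNorm

theorem mul_euclNorm_regularized_solution_sub_le {n : ℕ} {R S : Matrix (Fin n) (Fin n) ℝ} {c : ℝ}
    (hc : 0 < c) (hRS : algebraMap ℝ _ c ≤ R + S) (a θ : Fin n → ℝ) :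
    c * euclNorm ((R + S)⁻¹ *ᵥ (R *ᵥ a + S *ᵥ θ) - θ) ≤ euclNorm (R *ᵥ (a - θ)) := by
  have hdet : IsUnit (R + S).det :=
    (isUnit_iff_isUnit_det _).mp (posDef_of_algebraMap_le hc hRS).isUnit
  have herr : (R + S) *ᵥ ((R + S)⁻¹ *ᵥ (R *ᵥ a + S *ᵥ θ) - θ) = R *ᵥ (a - θ) := by
    rw [mulVec_sub, mulVec_mulVec, mul_nonsing_inv _ hdet, one_mulVec, add_mulVec, mulVec_sub]
    abel
  have := mul_euclNorm_le_of_algebraMap_le hRS ((R + S)⁻¹ *ᵥ (R *ᵥ a + S *ᵥ θ) - θ)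
  rwa [herr] at this

theorem tendsto_euclNorm_mulVec_zero {α : Type*} {l : Filter α} {m n : ℕ}
    {A : α → Matrix (Fin m) (Fin n) ℝ} (hA : Tendsto A l (𝓝 0)) {v : α → Fin n → ℝ} {C : ℝ}
    (hv : ∀ k, euclNorm (v k) ≤ C) : Tendsto (fun k => euclNorm (A k *ᵥ v k)) l (𝓝 0) := by
  -- The L2 operator norm induces the entrywise topology on matrices, so `hA` applies as is.
  have hnorm : Tendsto (fun k => ‖A k‖ * C) l (𝓝 0) := by
    simpa using (tendsto_zero_iff_norm_tendsto_zero.mp hA).mul_const C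
  refine squeeze_zero (fun k => norm_nonneg _) (fun k => ?_) hnorm
  exact (euclNorm_mulVec_le _ _).trans (mul_le_mul_of_nonneg_left (hv k) (norm_nonneg _))

theorem fading_reg_global_attractivity_general (p n : ℕ)
    (φ : ℕ → Matrix (Fin p) (Fin n) ℝ) (y : ℕ → Fin p → ℝ)
    (Γ : ℕ → Matrix (Fin p) (Fin p) ℝ) (hΓ : ∀ i, (Γ i).PosSemidef)
    (R : ℕ → Matrix (Fin n) (Fin n) ℝ) (hR : ∀ i, (R i).PosSemidef)
    (θreg : ℕ → Fin n → ℝ)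
    (θtrue : Fin n → ℝ) (hy : ∀ i, y i = (φ i).mulVec θtrue)
    (hRlim : Tendsto R atTop (nhds 0))
    (hbdd : ∃ C : ℝ, ∀ k, euclNorm (θreg k) ≤ C)
    (krank : ℕ)
    (hH : (∑ i ∈ range (krank + 1), (φ i)ᵀ * Γ i * φ i).PosSemidef)
    (hlam : 0 < ⨅ i, hH.1.eigenvalues i)
    (θ : ℕ → Fin n → ℝ)
    (hθ : ∀ k, θ (k + 1) = (R k + ∑ i ∈ range (k + 1), (φ i)ᵀ * Γ i * φ i)⁻¹.mulVec
      ((R k).mulVec (θreg k) + ∑ i ∈ range (k + 1), ((φ i)ᵀ * Γ i).mulVec (y i))) :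
    Tendsto θ atTop (nhds θtrue) := by
  obtain ⟨C, hC⟩ := hbdd
  set S : ℕ → Matrix (Fin n) (Fin n) ℝ := fun k => ∑ i ∈ range (k + 1), (φ i)ᵀ * Γ i * φ i
  set lam := ⨅ i, hH.1.eigenvalues i
  have hθS : ∀ k, θ (k + 1) = (R k + S k)⁻¹ *ᵥ (R k *ᵥ θreg k + S k *ᵥ θtrue) := fun k => by
    simp only [hθ k, S, hy, mulVec_mulVec, sum_mulVec]
  have hcoercive : ∀ k ≥ krank, algebraMap ℝ _ lam ≤ R k + S k := fun k hk =>
    calc algebraMap ℝ _ lam ≤ S krank := hH.1.algebraMap_iInf_eigenvalues_le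
      _ ≤ S k := sum_le_sum_of_subset_of_nonneg (range_subset_range.mpr (by omega))
          fun i _ _ => nonneg_iff_posSemidef.mpr <| by
            simpa only [conjTranspose_eq_transpose_of_trivial] using
              (hΓ i).conjTranspose_mul_mul_same (φ i)
      _ ≤ R k + S k := le_add_of_nonneg_left (nonneg_iff_posSemidef.mpr (hR k))
  have hresidual : Tendsto (fun k => euclNorm (R k *ᵥ (θreg k - θtrue))) atTop (𝓝 0) :=
    tendsto_euclNorm_mulVec_zero hRlim (C := C + euclNorm θtrue) fun k =>
      (euclNorm_sub_le _ _).trans (by linarith [hC k])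
  refine (tendsto_add_atTop_iff_nat 1).mp (tendsto_of_tendsto_euclNorm_sub ?_)
  refine squeeze_zero' (.of_forall fun k => norm_nonneg _) ?_
    (by simpa using hresidual.const_mul lam⁻¹)
  filter_upwards [eventually_ge_atTop krank] with k hk
  rw [hθS k, le_inv_mul_iff₀ hlam]
  exact mul_euclNorm_regularized_solution_sub_le hlam (hcoercive k hk) _ _

theorem fading_reg_global_attractivity (p n : ℕ)
    (φ : ℕ → Matrix (Fin p) (Fin n) ℝ) (y : ℕ → Fin p → ℝ)
    (Γ : ℕ → Matrix (Fin p) (Fin p) ℝ) (hΓ : ∀ i, (Γ i).PosSemidef)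
    (R : ℕ → Matrix (Fin n) (Fin n) ℝ) (hR : ∀ i, (R i).PosSemidef)
    (hpd : ∀ k, (R k + ∑ i ∈ range (k + 1), (φ i)ᵀ * Γ i * φ i).PosDef)
    (θreg : ℕ → Fin n → ℝ)
    (θtrue : Fin n → ℝ) (hy : ∀ i, y i = (φ i).mulVec θtrue)
    (hRlim : Tendsto R atTop (nhds 0))
    (hbdd : ∃ C : ℝ, ∀ k, euclNorm (θreg k) ≤ C)
    (krank : ℕ)
    (hH : (∑ i ∈ range (krank + 1), (φ i)ᵀ * Γ i * φ i).PosSemidef)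
    (hlam : 0 < ⨅ i, hH.1.eigenvalues i)
    (θ : ℕ → Fin n → ℝ)
    (hθ : ∀ k, θ (k + 1) = (R k + ∑ i ∈ range (k + 1), (φ i)ᵀ * Γ i * φ i)⁻¹.mulVec
      ((R k).mulVec (θreg k) + ∑ i ∈ range (k + 1), ((φ i)ᵀ * Γ i).mulVec (y i))) :
    Tendsto θ atTop (nhds θtrue) :=
  fading_reg_global_attractivity_general p n φ y Γ hΓ R hR θreg θtrue hy hRlim hbdd krank hH hlam θ
    hθ
end

section
/- Finite-time attractivity: suppose y_i = φ_iθ, there exists k_rank with Σ_{i=0}^{k_rank} φ_iᵀΓ_iφ_i positive definite, and there exists k_cut ≥ k_rank such that R_k = 0 for all k ≥ k_cut. Then for all k ≥ k_cut, the estimate θ_{k+1} = (R_k + Σ_{i=0}^k φ_iᵀΓ_iφ_i)⁻¹(R_kθ_reg,k + Σ_{i=0}^k φ_iᵀΓ_iy_i) equals θ exactly. -/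
open Matrix Finset

theorem fading_reg_finite_time_attractivity (p n : ℕ)
    (φ : ℕ → Matrix (Fin p) (Fin n) ℝ) (y : ℕ → Fin p → ℝ)
    (Γ : ℕ → Matrix (Fin p) (Fin p) ℝ) (hΓ : ∀ i, (Γ i).PosSemidef)
    (R : ℕ → Matrix (Fin n) (Fin n) ℝ) (hR : ∀ i, (R i).PosSemidef)
    (hpd : ∀ k, (R k + ∑ i ∈ range (k + 1), (φ i)ᵀ * Γ i * φ i).PosDef)
    (θreg : ℕ → Fin n → ℝ)
    (θtrue : Fin n → ℝ) (hy : ∀ i, y i = (φ i).mulVec θtrue)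
    (krank : ℕ) (hrank : (∑ i ∈ range (krank + 1), (φ i)ᵀ * Γ i * φ i).PosDef)
    (kcut : ℕ) (hcut : krank ≤ kcut) (hRzero : ∀ k, kcut ≤ k → R k = 0)
    (θ : ℕ → Fin n → ℝ)
    (hθ : ∀ k, θ (k + 1) = (R k + ∑ i ∈ range (k + 1), (φ i)ᵀ * Γ i * φ i)⁻¹.mulVec
      ((R k).mulVec (θreg k) + ∑ i ∈ range (k + 1), ((φ i)ᵀ * Γ i).mulVec (y i))) :
    ∀ k, kcut ≤ k → θ (k + 1) = θtrue := by
  intro k hk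
  have hS := hpd k
  rw [hRzero k hk, zero_add] at hS
  have hsum : ∑ i ∈ range (k + 1), ((φ i)ᵀ * Γ i).mulVec (y i)
      = (∑ i ∈ range (k + 1), (φ i)ᵀ * Γ i * φ i).mulVec θtrue := by
    have : ∀ i ∈ range (k + 1), ((φ i)ᵀ * Γ i) *ᵥ y i = ((φ i)ᵀ * Γ i * φ i) *ᵥ θtrue := by
      intro i _; rw [hy i, Matrix.mulVec_mulVec]
    rw [Finset.sum_congr rfl this]
    exact (map_sum (Matrix.mulVec.addMonoidHomLeft θtrue)
      (fun i => (φ i)ᵀ * Γ i * φ i) (range (k + 1))).symm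
  rw [hθ k, hRzero k hk, zero_add, Matrix.zero_mulVec, zero_add, hsum,
    Matrix.mulVec_mulVec, Matrix.nonsing_inv_mul _ (isUnit_iff_ne_zero.mpr hS.det_pos.ne'), Matrix.one_mulVec]
end
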